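/- arXiv:2410.11238 — 4 statements merged into one kernel-verified Lean document; each statement's English description precedes it below -/
import Mathlib

section
/- Under the area-level model with Gaussian sampling error and symmetric random effect, the fourth moment of the standardized prediction error H = (θ − θ̃)/√g₁ equals E[H⁴] = 3 + (D/(A+D))²·(E[u⁴]/A² − 3); in particular E[H⁴] − 3 equals (D/(A+D))² times the excess kurtosis of u. -/
open MeasureTheory ProbabilityTheory
open scoped NNReal ENNReal
open Real Set Filter

lemma aux_integrableOn_abs_pow {b : ℝ} (hb : 0 < b) (n : ℕ) :
    IntegrableOn (fun x : ℝ => |x| ^ n * Real.exp (-b * x ^ 2)) (Ioi 0) := by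
  refine (integrableOn_rpow_mul_exp_neg_mul_sq hb (s := (n : ℝ))
    (by exact_mod_cast neg_one_lt_zero.trans_le (Nat.cast_nonneg n))).congr_fun ?_ measurableSet_Ioi
  intro x hx
  simp only []
  rw [abs_of_pos hx, Real.rpow_natCast]

lemma aux_integrable_abs_pow {b : ℝ} (hb : 0 < b) (n : ℕ) :
    Integrable (fun x : ℝ => |x| ^ n * Real.exp (-b * x ^ 2)) := by
  rw [← integrableOn_univ, ← @Iio_union_Ici _ _ (0 : ℝ), integrableOn_union,
    integrableOn_Ici_iff_integrableOn_Ioi]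
  refine ⟨?_, aux_integrableOn_abs_pow hb n⟩
  rw [← (Measure.measurePreserving_neg (volume : Measure ℝ)).integrableOn_comp_preimage
      (Homeomorph.neg ℝ).measurableEmbedding]
  simp only [Function.comp_def, abs_neg, neg_sq, neg_preimage, neg_Iio, neg_neg, neg_zero]
  exact aux_integrableOn_abs_pow hb n

lemma aux_integrable_pow {b : ℝ} (hb : 0 < b) (n : ℕ) :
    Integrable (fun x : ℝ => x ^ n * Real.exp (-b * x ^ 2)) := by
  refine (aux_integrable_abs_pow hb n).mono' ?_ (ae_of_all _ fun x => ?_)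
  · exact ((measurable_id.pow_const n).mul
      (((measurable_id.pow_const 2).const_mul (-b)).exp)).aestronglyMeasurable
  · rw [Real.norm_eq_abs, abs_mul, abs_of_nonneg (Real.exp_pos _).le, ← pow_abs]

lemma aux_tendsto_pow_mul_exp {b : ℝ} (hb : 0 < b) (n : ℕ) :
    Tendsto (fun x : ℝ => x ^ n * Real.exp (-b * x ^ 2)) atTop (nhds 0) := by
  have h1 : Tendsto (fun x : ℝ => Real.exp (-(1 / 2) * x)) atTop (nhds 0) := by
    apply Real.tendsto_exp_atBot.comp
    exact tendsto_id.const_mul_atTop_of_neg (by norm_num)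
  have h2 := (rpow_mul_exp_neg_mul_sq_isLittleO_exp_neg hb (n : ℝ)).tendsto_zero_of_tendsto h1
  apply h2.congr'
  filter_upwards [eventually_gt_atTop (0 : ℝ)] with x hx
  rw [Real.rpow_natCast]

lemma aux_rec {b : ℝ} (hb : 0 < b) (n : ℕ) :
    ∫ x in Ioi (0:ℝ), x ^ (n + 2) * Real.exp (-b * x ^ 2)
      = ((n + 1 : ℝ) / (2 * b)) * ∫ x in Ioi (0:ℝ), x ^ n * Real.exp (-b * x ^ 2) := by
  have hderiv : ∀ x ∈ Ici (0 : ℝ), HasDerivAt (fun x : ℝ => x ^ (n + 1) * Real.exp (-b * x ^ 2))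
      ((n + 1 : ℝ) * (x ^ n * Real.exp (-b * x ^ 2))
        - 2 * b * (x ^ (n + 2) * Real.exp (-b * x ^ 2))) x := by
    intro x _
    have h := (hasDerivAt_pow (n + 1) x).fun_mul (((hasDerivAt_pow 2 x).const_mul (-b)).exp)
    refine h.congr_deriv ?_
    simp only [Nat.add_sub_cancel]
    push_cast
    ring
  have hint : IntegrableOn (fun x : ℝ => (n + 1 : ℝ) * (x ^ n * Real.exp (-b * x ^ 2))
      - 2 * b * (x ^ (n + 2) * Real.exp (-b * x ^ 2))) (Ioi 0) := by
    exact (((aux_integrable_pow hb n).const_mul _).sub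
      ((aux_integrable_pow hb (n + 2)).const_mul _)).integrableOn
  have key := integral_Ioi_of_hasDerivAt_of_tendsto' hderiv hint (aux_tendsto_pow_mul_exp hb (n + 1))
  simp only [ne_eq, zero_pow, Nat.succ_ne_zero, not_false_iff, zero_mul, sub_zero] at key
  rw [integral_sub (((aux_integrable_pow hb n).const_mul _).integrableOn)
    (((aux_integrable_pow hb (n + 2)).const_mul _).integrableOn),
    integral_const_mul, integral_const_mul] at key
  have hb' : (2 : ℝ) * b ≠ 0 := by positivity
  field_simp at key ⊢
  linarith [key]

lemma aux_even_moment {b : ℝ} (m : ℕ) :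
    ∫ x : ℝ, x ^ (2 * m) * Real.exp (-b * x ^ 2)
      = 2 * ∫ x in Ioi (0:ℝ), x ^ (2 * m) * Real.exp (-b * x ^ 2) := by
  rw [← integral_comp_abs (f := fun x => x ^ (2 * m) * Real.exp (-b * x ^ 2))]
  congr 1 with x
  rw [pow_mul, pow_mul, sq_abs]

lemma aux_moment2 {b : ℝ} (hb : 0 < b) :
    ∫ x : ℝ, x ^ 2 * Real.exp (-b * x ^ 2) = 1 / (2 * b) * Real.sqrt (π / b) := by
  have h0 : ∫ x in Ioi (0:ℝ), x ^ 0 * Real.exp (-b * x ^ 2) = Real.sqrt (π / b) / 2 := by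
    simpa using integral_gaussian_Ioi b
  have h2 := aux_rec hb 0
  rw [h0] at h2
  have := aux_even_moment (b := b) 1
  norm_num at this h2 ⊢
  rw [this, h2]
  ring

lemma aux_moment4 {b : ℝ} (hb : 0 < b) :
    ∫ x : ℝ, x ^ 4 * Real.exp (-b * x ^ 2) = 3 / (4 * b ^ 2) * Real.sqrt (π / b) := by
  have h0 : ∫ x in Ioi (0:ℝ), x ^ 0 * Real.exp (-b * x ^ 2) = Real.sqrt (π / b) / 2 := by
    simpa using integral_gaussian_Ioi b
  have h2 := aux_rec hb 0
  rw [h0] at h2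
  have h4 := aux_rec hb 2
  rw [h2] at h4
  have := aux_even_moment (b := b) 2
  norm_num at this h2 h4 ⊢
  rw [this, h4]
  field_simp
  ring

open scoped NNReal ENNReal

lemma aux_gaussian_integral_eq {D : ℝ≥0} (hD : D ≠ 0) (g : ℝ → ℝ) :
    ∫ x, g x ∂(gaussianReal 0 D) = ∫ x, gaussianPDFReal 0 D x * g x := by
  rw [gaussianReal_of_var_ne_zero 0 hD]
  rw [show gaussianPDF 0 D = fun x => ((Real.toNNReal (gaussianPDFReal 0 D x) : ℝ≥0) : ℝ≥0∞)
    from rfl]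
  rw [integral_withDensity_eq_integral_smul
    (measurable_gaussianPDFReal 0 D).real_toNNReal g]
  congr 1 with x
  rw [NNReal.smul_def, Real.coe_toNNReal _ (gaussianPDFReal_nonneg 0 D x), smul_eq_mul]

lemma aux_gaussian_integrable_iff {D : ℝ≥0} (hD : D ≠ 0) (g : ℝ → ℝ) :
    Integrable g (gaussianReal 0 D) ↔
      Integrable (fun x => gaussianPDFReal 0 D x * g x) volume := by
  rw [gaussianReal_of_var_ne_zero 0 hD]
  rw [show gaussianPDF 0 D = fun x => ((Real.toNNReal (gaussianPDFReal 0 D x) : ℝ≥0) : ℝ≥0∞)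
    from rfl]
  rw [integrable_withDensity_iff_integrable_smul
    (measurable_gaussianPDFReal 0 D).real_toNNReal]
  constructor <;> intro h <;> apply h.congr <;> refine ae_of_all _ fun x => ?_ <;>
    simp only [NNReal.smul_def, Real.coe_toNNReal _ (gaussianPDFReal_nonneg 0 D x), smul_eq_mul]

lemma aux_pdf_mul {D : ℝ≥0} (hD : D ≠ 0) (k : ℕ) :
    (fun x : ℝ => gaussianPDFReal 0 D x * x ^ k)
      = fun x => (Real.sqrt (2 * π * D))⁻¹ * (x ^ k * Real.exp (-(2 * (D:ℝ))⁻¹ * x ^ 2)) := by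
  funext x
  rw [gaussianPDFReal]
  have : -(x - 0) ^ 2 / (2 * (D:ℝ)) = -(2 * (D:ℝ))⁻¹ * x ^ 2 := by ring
  rw [this]
  ring

lemma aux_gaussian_pow_integrable {D : ℝ≥0} (hD : D ≠ 0) (k : ℕ) :
    Integrable (fun x : ℝ => x ^ k) (gaussianReal 0 D) := by
  rw [aux_gaussian_integrable_iff hD, aux_pdf_mul hD]
  have hb : (0:ℝ) < (2 * (D:ℝ))⁻¹ := by
    have h : (0:ℝ) < (D:ℝ) := by exact_mod_cast hD.bot_lt
    positivity
  exact (aux_integrable_pow hb k).const_mul _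

lemma aux_sqrt_eq {D : ℝ≥0} (hD : D ≠ 0) :
    Real.sqrt (π / (2 * (D:ℝ))⁻¹) = Real.sqrt (2 * π * D) := by
  have h : (0:ℝ) < (D:ℝ) := by exact_mod_cast hD.bot_lt
  congr 1
  field_simp

lemma aux_gaussian_moment2 {D : ℝ≥0} (hD : D ≠ 0) :
    ∫ x, x ^ 2 ∂(gaussianReal 0 D) = (D : ℝ) := by
  have h : (0:ℝ) < (D:ℝ) := by exact_mod_cast hD.bot_lt
  have hb : (0:ℝ) < (2 * (D:ℝ))⁻¹ := by positivity
  rw [aux_gaussian_integral_eq hD, show (fun x : ℝ => gaussianPDFReal 0 D x * x ^ 2)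
    = fun x => (Real.sqrt (2 * π * D))⁻¹ * (x ^ 2 * Real.exp (-(2 * (D:ℝ))⁻¹ * x ^ 2))
    from aux_pdf_mul hD 2, integral_const_mul, aux_moment2 hb, aux_sqrt_eq hD]
  have hs : Real.sqrt (2 * π * D) ≠ 0 := by positivity
  field_simp

lemma aux_gaussian_moment4 {D : ℝ≥0} (hD : D ≠ 0) :
    ∫ x, x ^ 4 ∂(gaussianReal 0 D) = 3 * (D : ℝ) ^ 2 := by
  have h : (0:ℝ) < (D:ℝ) := by exact_mod_cast hD.bot_lt
  have hb : (0:ℝ) < (2 * (D:ℝ))⁻¹ := by positivity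
  rw [aux_gaussian_integral_eq hD, show (fun x : ℝ => gaussianPDFReal 0 D x * x ^ 4)
    = fun x => (Real.sqrt (2 * π * D))⁻¹ * (x ^ 4 * Real.exp (-(2 * (D:ℝ))⁻¹ * x ^ 2))
    from aux_pdf_mul hD 4, integral_const_mul, aux_moment4 hb, aux_sqrt_eq hD]
  have hs : Real.sqrt (2 * π * D) ≠ 0 := by positivity
  field_simp
  ring

/-- Under the area-level model with Gaussian sampling error and symmetric random effect,
the fourth moment of the standardized prediction error `H = (θ − θ̃)/√g₁` equals
`E[H⁴] = 3 + (D/(A+D))²·(E[u⁴]/A² − 3)`; in particular `E[H⁴] − 3` equals `(D/(A+D))²`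
times the excess kurtosis of `u`. -/
theorem fourth_moment_standardized_prediction_error
    {Ω : Type*} [MeasureSpace Ω] [IsProbabilityMeasure (ℙ : Measure Ω)]
    (u e : Ω → ℝ) (A μ0 : ℝ) (D : ℝ≥0) (hA : 0 < A) (hD : 0 < D)
    (hu_meas : Measurable u) (he_meas : Measurable e)
    (h_indep : IndepFun u e)
    (he_law : Measure.map e ℙ = gaussianReal 0 D)
    (hu_mean : (∫ ω, u ω) = 0) (hu_var : (∫ ω, (u ω) ^ 2) = A)
    (hu_third : (∫ ω, (u ω) ^ 3) = 0)
    (hu4_int : Integrable (fun ω => (u ω) ^ 4))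
    (θ y θt H : Ω → ℝ) (B g1 : ℝ)
    (hθ : θ = fun ω => μ0 + u ω) (hy : y = fun ω => θ ω + e ω)
    (hB : B = (D : ℝ) / (A + (D : ℝ)))
    (hg1 : g1 = A * (D : ℝ) / (A + (D : ℝ)))
    (hθt : θt = fun ω => (1 - B) * y ω + B * μ0)
    (hH : H = fun ω => (θ ω - θt ω) / Real.sqrt g1) :
    (∫ ω, (H ω) ^ 4) = 3 + ((D : ℝ) / (A + (D : ℝ))) ^ 2 * ((∫ ω, (u ω) ^ 4) / A ^ 2 - 3) ∧
      (∫ ω, (H ω) ^ 4) - 3 = ((D : ℝ) / (A + (D : ℝ))) ^ 2 * ((∫ ω, (u ω) ^ 4) / A ^ 2 - 3) := by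
  have hDne : D ≠ 0 := hD.ne'
  have hD' : (0:ℝ) < (D:ℝ) := by exact_mod_cast hD
  have hAD : (0:ℝ) < A + (D:ℝ) := by positivity
  have hg1pos : 0 < g1 := by rw [hg1]; positivity
  have hs4 : Real.sqrt g1 ^ 4 = g1 ^ 2 := by
    rw [show (4:ℕ) = 2 * 2 from rfl, pow_mul, Real.sq_sqrt hg1pos.le]
  -- integrability of powers of u
  have hu_ik : ∀ k : ℕ, k ≤ 4 → Integrable (fun ω => u ω ^ k) := by
    intro k hk
    refine ((integrable_const (1:ℝ)).add hu4_int).mono'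
      ((hu_meas.pow_const k).aestronglyMeasurable) (ae_of_all _ fun ω => ?_)
    rw [Real.norm_eq_abs, abs_pow]
    simp only [Pi.add_apply]
    rcases le_or_gt |u ω| 1 with h | h
    · have h1 : |u ω| ^ k ≤ 1 := pow_le_one₀ (abs_nonneg _) h
      have h2 : (0:ℝ) ≤ u ω ^ 4 := by positivity
      linarith
    · have h1 : |u ω| ^ k ≤ |u ω| ^ 4 := pow_le_pow_right₀ h.le hk
      have h2 : |u ω| ^ 4 = u ω ^ 4 := by rw [← abs_pow, abs_of_nonneg (by positivity)]
      linarith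
  -- integrability of powers of e
  have he_ik : ∀ k : ℕ, Integrable (fun ω => e ω ^ k) := by
    intro k
    have h1 : Integrable (fun x : ℝ => x ^ k) (Measure.map e ℙ) := by
      rw [he_law]; exact aux_gaussian_pow_integrable hDne k
    exact h1.comp_aemeasurable he_meas.aemeasurable
  -- moments of e
  have he_mom : ∀ k : ℕ, (∫ ω, e ω ^ k) = ∫ x, x ^ k ∂(gaussianReal 0 D) := by
    intro k
    rw [← he_law]
    exact (integral_map he_meas.aemeasurable
      ((measurable_id.pow_const k).aestronglyMeasurable)).symm
  have he2 : (∫ ω, e ω ^ 2) = (D:ℝ) := by rw [he_mom 2, aux_gaussian_moment2 hDne]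
  have he4 : (∫ ω, e ω ^ 4) = 3 * (D:ℝ) ^ 2 := by rw [he_mom 4, aux_gaussian_moment4 hDne]
  -- independence of powers
  have hind : ∀ j k : ℕ, IndepFun (fun ω => u ω ^ j) (fun ω => e ω ^ k) ℙ := fun j k =>
    h_indep.comp (measurable_id.pow_const j) (measurable_id.pow_const k)
  have hmul : ∀ j k : ℕ, j ≤ 4 → Integrable (fun ω => u ω ^ j * e ω ^ k) := fun j k hj =>
    (hind j k).integrable_mul (hu_ik j hj) (he_ik k)
  have hsplit : ∀ j k : ℕ, (∫ ω, u ω ^ j * e ω ^ k) = (∫ ω, u ω ^ j) * ∫ ω, e ω ^ k :=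
    fun j k => (hind j k).integral_fun_mul_eq_mul_integral ((hu_meas.pow_const j).aestronglyMeasurable)
      ((he_meas.pow_const k).aestronglyMeasurable)
  have hu1' : (∫ ω, u ω ^ 1) = 0 := by simpa using hu_mean
  -- expansion of the integrand
  have hexp : (fun ω => H ω ^ 4) = fun ω =>
      (B ^ 4 / g1 ^ 2) * u ω ^ 4
        - (4 * B ^ 3 * (1 - B) / g1 ^ 2) * (u ω ^ 3 * e ω ^ 1)
        + (6 * B ^ 2 * (1 - B) ^ 2 / g1 ^ 2) * (u ω ^ 2 * e ω ^ 2)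
        - (4 * B * (1 - B) ^ 3 / g1 ^ 2) * (u ω ^ 1 * e ω ^ 3)
        + ((1 - B) ^ 4 / g1 ^ 2) * e ω ^ 4 := by
    funext ω
    simp only [hH, hθt, hy, hθ]
    rw [div_pow, hs4]
    ring
  -- integrable pieces
  have I1 : Integrable (fun ω => (B ^ 4 / g1 ^ 2) * u ω ^ 4) := hu4_int.const_mul _
  have I2 : Integrable (fun ω => (4 * B ^ 3 * (1 - B) / g1 ^ 2) * (u ω ^ 3 * e ω ^ 1)) :=
    (hmul 3 1 (by norm_num)).const_mul _
  have I3 : Integrable (fun ω => (6 * B ^ 2 * (1 - B) ^ 2 / g1 ^ 2) * (u ω ^ 2 * e ω ^ 2)) :=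
    (hmul 2 2 (by norm_num)).const_mul _
  have I4 : Integrable (fun ω => (4 * B * (1 - B) ^ 3 / g1 ^ 2) * (u ω ^ 1 * e ω ^ 3)) :=
    (hmul 1 3 (by norm_num)).const_mul _
  have I5 : Integrable (fun ω => ((1 - B) ^ 4 / g1 ^ 2) * e ω ^ 4) :=
    (he_ik 4).const_mul _
  have hint : (∫ ω, H ω ^ 4)
      = (B ^ 4 / g1 ^ 2) * (∫ ω, u ω ^ 4)
        - (4 * B ^ 3 * (1 - B) / g1 ^ 2) * ((∫ ω, u ω ^ 3) * ∫ ω, e ω ^ 1)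
        + (6 * B ^ 2 * (1 - B) ^ 2 / g1 ^ 2) * ((∫ ω, u ω ^ 2) * ∫ ω, e ω ^ 2)
        - (4 * B * (1 - B) ^ 3 / g1 ^ 2) * ((∫ ω, u ω ^ 1) * ∫ ω, e ω ^ 3)
        + ((1 - B) ^ 4 / g1 ^ 2) * ∫ ω, e ω ^ 4 := by
    have J1 : Integrable (fun ω => (B ^ 4 / g1 ^ 2) * u ω ^ 4
        - (4 * B ^ 3 * (1 - B) / g1 ^ 2) * (u ω ^ 3 * e ω ^ 1)) := I1.sub I2
    have J2 : Integrable (fun ω => (B ^ 4 / g1 ^ 2) * u ω ^ 4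
        - (4 * B ^ 3 * (1 - B) / g1 ^ 2) * (u ω ^ 3 * e ω ^ 1)
        + (6 * B ^ 2 * (1 - B) ^ 2 / g1 ^ 2) * (u ω ^ 2 * e ω ^ 2)) := J1.add I3
    have J3 : Integrable (fun ω => (B ^ 4 / g1 ^ 2) * u ω ^ 4
        - (4 * B ^ 3 * (1 - B) / g1 ^ 2) * (u ω ^ 3 * e ω ^ 1)
        + (6 * B ^ 2 * (1 - B) ^ 2 / g1 ^ 2) * (u ω ^ 2 * e ω ^ 2)
        - (4 * B * (1 - B) ^ 3 / g1 ^ 2) * (u ω ^ 1 * e ω ^ 3)) := J2.sub I4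
    rw [hexp, integral_add J3 I5, integral_sub J2 I4, integral_add J1 I3, integral_sub I1 I2,
      integral_const_mul, integral_const_mul, integral_const_mul, integral_const_mul,
      integral_const_mul, hsplit 3 1, hsplit 2 2, hsplit 1 3]
  rw [hint, hu_third, hu1', hu_var, he2, he4]
  have key : (B ^ 4 / g1 ^ 2) * (∫ ω, u ω ^ 4)
      - (4 * B ^ 3 * (1 - B) / g1 ^ 2) * (0 * ∫ ω, e ω ^ 1)
      + (6 * B ^ 2 * (1 - B) ^ 2 / g1 ^ 2) * (A * (D:ℝ))
      - (4 * B * (1 - B) ^ 3 / g1 ^ 2) * (0 * ∫ ω, e ω ^ 3)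
      + ((1 - B) ^ 4 / g1 ^ 2) * (3 * (D:ℝ) ^ 2)
      = 3 + ((D : ℝ) / (A + (D : ℝ))) ^ 2 * ((∫ ω, (u ω) ^ 4) / A ^ 2 - 3) := by
    rw [hB, hg1]
    have hg1ne : A * (D:ℝ) / (A + (D:ℝ)) ≠ 0 := by positivity
    field_simp
    ring
  exact ⟨key, by rw [key]; ring⟩
end

section
/- Expected value of the quadratic form appearing in the derivative of the Fay–Herriot estimating function: if Y = X·β + w where the components of w are mean-zero, pairwise uncorrelated, with Var(w_j) = Σ_jj, then E[Yᵀ P² Y] = trace(P), where P = Σ⁻¹ − Σ⁻¹X(XᵀΣ⁻¹X)⁻¹XᵀΣ⁻¹. -/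
open MeasureTheory ProbabilityTheory Matrix

/-- Expected value of the quadratic form appearing in the derivative of the Fay–Herriot
estimating function: if `Y = Xβ + w` with mean-zero, pairwise uncorrelated components
satisfying `Var(w_j) = Σ_jj`, then `E[Yᵀ P² Y] = trace(P)`, where
`P = Σ⁻¹ − Σ⁻¹X(XᵀΣ⁻¹X)⁻¹XᵀΣ⁻¹`. -/
theorem expected_quadratic_form_eq_trace
    {Ω : Type*} [MeasureSpace Ω] [IsProbabilityMeasure (ℙ : Measure Ω)]
    {ι : Type*} [Fintype ι] [DecidableEq ι] {p : ℕ}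
    (d : ι → ℝ) (hd : ∀ j, 0 < d j)
    (S : Matrix ι ι ℝ) (hS : S = Matrix.diagonal d)
    (X : Matrix ι (Fin p) ℝ)
    (hX_unit : IsUnit (Xᵀ * S⁻¹ * X))
    (P : Matrix ι ι ℝ)
    (hP : P = S⁻¹ - S⁻¹ * X * (Xᵀ * S⁻¹ * X)⁻¹ * Xᵀ * S⁻¹)
    (w : ι → Ω → ℝ) (hw_meas : ∀ j, Measurable (w j))
    (hw_sq : ∀ j, MemLp (w j) 2)
    (hw_mean : ∀ j, (∫ ω, w j ω) = 0)
    (hw_var : ∀ j, (∫ ω, (w j ω) ^ 2) = S j j)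
    (hw_cov : ∀ j k, j ≠ k → (∫ ω, w j ω * w k ω) = 0)
    (β : Fin p → ℝ) (Y : Ω → ι → ℝ)
    (hY : Y = fun ω => X *ᵥ β + fun j => w j ω) :
    (∫ ω, Y ω ⬝ᵥ ((P * P) *ᵥ Y ω)) = Matrix.trace P := by
  -- integrability of products
  have hint : ∀ j k : ι, Integrable (fun ω => w j ω * w k ω) := by
    intro j k
    have := ((hw_sq k).smul (r := 1) (hw_sq j))
    exact memLp_one_iff_integrable.mp this
  -- S invertible
  have hSdet : IsUnit S.det := by
    rw [hS, Matrix.det_diagonal]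
    exact (Finset.prod_pos fun j _ => hd j).ne'.isUnit
  have hSinv : S⁻¹ * S = 1 := Matrix.nonsing_inv_mul S hSdet
  have hSinv' : S * S⁻¹ = 1 := Matrix.mul_nonsing_inv S hSdet
  have hA : (Xᵀ * S⁻¹ * X)⁻¹ * (Xᵀ * S⁻¹ * X) = 1 :=
    Matrix.nonsing_inv_mul _ ((Matrix.isUnit_iff_isUnit_det _).mp hX_unit)
  -- symmetry facts
  have hSsymm : Sᵀ = S := by rw [hS, Matrix.diagonal_transpose]
  have hSinvsymm : (S⁻¹)ᵀ = S⁻¹ := by rw [Matrix.transpose_nonsing_inv, hSsymm]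
  have hAsymm : (Xᵀ * S⁻¹ * X)ᵀ = Xᵀ * S⁻¹ * X := by
    simp [Matrix.transpose_mul, hSinvsymm, Matrix.mul_assoc]
  have hPsymm : Pᵀ = P := by
    rw [hP]
    simp only [Matrix.transpose_sub, Matrix.transpose_mul, hSinvsymm,
      Matrix.transpose_nonsing_inv, hAsymm, Matrix.transpose_transpose]
    simp [Matrix.mul_assoc]
  -- P * X = 0
  have hPX : P * X = 0 := by
    rw [hP, Matrix.sub_mul]
    have : S⁻¹ * X * (Xᵀ * S⁻¹ * X)⁻¹ * Xᵀ * S⁻¹ * X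
        = S⁻¹ * X * ((Xᵀ * S⁻¹ * X)⁻¹ * (Xᵀ * S⁻¹ * X)) := by
      simp only [Matrix.mul_assoc]
    rw [this, hA, Matrix.mul_one, sub_self]
  set M : Matrix ι ι ℝ := P * P with hM
  have hMX : M * X = 0 := by rw [hM, Matrix.mul_assoc, hPX, Matrix.mul_zero]
  have hMsymm : Mᵀ = M := by rw [hM, Matrix.transpose_mul, hPsymm]
  -- pointwise simplification
  have hpt : ∀ ω, Y ω ⬝ᵥ (M *ᵥ Y ω)
      = (fun j => w j ω) ⬝ᵥ (M *ᵥ fun j => w j ω) := by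
    intro ω
    rw [hY]
    set v : ι → ℝ := fun j => w j ω with hv
    have h1 : M *ᵥ (X *ᵥ β) = 0 := by
      rw [Matrix.mulVec_mulVec, hMX, Matrix.zero_mulVec]
    have h2 : (X *ᵥ β) ᵥ* M = 0 := by
      rw [← hMsymm, ← Matrix.mulVec_transpose, Matrix.transpose_transpose,
        Matrix.mulVec_mulVec, hMX, Matrix.zero_mulVec]
    simp only [Matrix.mulVec_add, add_dotProduct, h1, add_zero,
      Matrix.dotProduct_mulVec (X *ᵥ β) M v, h2, zero_dotProduct,
      zero_add, ← hv]
  -- rewrite quadratic form as double sum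
  have hsum : ∀ ω, (fun j => w j ω) ⬝ᵥ (M *ᵥ fun j => w j ω)
      = ∑ j, ∑ k, M j k * (w j ω * w k ω) := by
    intro ω
    simp only [dotProduct, Matrix.mulVec, dotProduct,
      Finset.mul_sum]
    congr 1; ext j; congr 1; ext k; ring
  have hintjk : ∀ j k : ι, Integrable (fun ω => M j k * (w j ω * w k ω)) :=
    fun j k => (hint j k).const_mul _
  calc (∫ ω, Y ω ⬝ᵥ (M *ᵥ Y ω))
      = ∫ ω, ∑ j, ∑ k, M j k * (w j ω * w k ω) := by
        refine integral_congr_ae (Filter.Eventually.of_forall fun ω => ?_)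
        exact (hpt ω).trans (hsum ω)
    _ = ∑ j, ∑ k, M j k * ∫ ω, w j ω * w k ω := by
        rw [integral_finset_sum _ fun j _ => integrable_finset_sum _
          fun k _ => hintjk j k]
        refine Finset.sum_congr rfl fun j _ => ?_
        rw [integral_finset_sum _ fun k _ => hintjk j k]
        exact Finset.sum_congr rfl fun k _ => integral_const_mul _ _
    _ = ∑ j, M j j * S j j := by
        refine Finset.sum_congr rfl fun j _ => ?_
        rw [Finset.sum_eq_single j]
        · rw [← hw_var j]
          congr 1
          exact integral_congr_ae (Filter.Eventually.of_forall fun ω => by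
            simp [sq])
        · intro k _ hk
          rw [hw_cov j k (Ne.symm hk), mul_zero]
        · intro h; exact absurd (Finset.mem_univ j) h
    _ = Matrix.trace (M * S) := by
        rw [Matrix.trace]
        refine (Finset.sum_congr rfl fun j _ => ?_).symm
        rw [Matrix.diag_apply, Matrix.mul_apply, hS]
        simp [Matrix.diagonal_apply, Finset.sum_ite_eq, hS]
    _ = Matrix.trace P := by
        have hPS : P * S = 1 - S⁻¹ * X * (Xᵀ * S⁻¹ * X)⁻¹ * Xᵀ := by
          rw [hP, Matrix.sub_mul, hSinv]
          congr 1
          simp only [Matrix.mul_assoc, hSinv, Matrix.mul_one]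
        have : M * S = P - P * (S⁻¹ * X * (Xᵀ * S⁻¹ * X)⁻¹ * Xᵀ) := by
          rw [hM, Matrix.mul_assoc, hPS, Matrix.mul_sub, Matrix.mul_one]
        rw [this, Matrix.trace_sub]
        have hz : Matrix.trace (P * (S⁻¹ * X * (Xᵀ * S⁻¹ * X)⁻¹ * Xᵀ)) = 0 := by
          have : P * (S⁻¹ * X * (Xᵀ * S⁻¹ * X)⁻¹ * Xᵀ)
              = (P * (S⁻¹ * X * (Xᵀ * S⁻¹ * X)⁻¹)) * Xᵀ := by
            simp only [Matrix.mul_assoc]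
          rw [this, Matrix.trace_mul_comm]
          have hXPz : Xᵀ * (P * (S⁻¹ * X * (Xᵀ * S⁻¹ * X)⁻¹))
              = (Xᵀ * P) * (S⁻¹ * X * (Xᵀ * S⁻¹ * X)⁻¹) := by
            simp only [Matrix.mul_assoc]
          have hXP : Xᵀ * P = 0 := by
            have := congrArg Matrix.transpose hPX
            simpa [Matrix.transpose_mul, hPsymm] using this
          rw [hXPz, hXP, Matrix.zero_mul, Matrix.trace_zero]
        rw [hz, sub_zero]
end

section
/- The matrix-valued map A ↦ P(A) = Σ(A)⁻¹ − Σ(A)⁻¹X(XᵀΣ(A)⁻¹X)⁻¹XᵀΣ(A)⁻¹ is differentiable on (0, ∞) with derivative dP/dA = −P(A)·P(A) at every A > 0 (in the sense that each entry of P has derivative equal to the corresponding entry of −P(A)²). -/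
set_option maxHeartbeats 1000000

open Matrix

attribute [local instance] Matrix.linftyOpNormedRing Matrix.linftyOpNormedAlgebra
  Matrix.linftyOpNormedAddCommGroup Matrix.linftyOpNormedSpace

section aux

variable {ι κ : Type*} [Fintype ι] [DecidableEq ι] [Fintype κ] [DecidableEq κ]

private lemma diagonal_eq_sum (v : ι → ℝ) :
    Matrix.diagonal v = ∑ i, v i • Matrix.single i i (1 : ℝ) := by
  ext a b
  simp only [Matrix.sum_apply, Matrix.smul_apply, Matrix.single, smul_eq_mul,
    Matrix.diagonal_apply, Matrix.of_apply]
  by_cases h : a = b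
  · subst h; simp
  · rw [if_neg h, Finset.sum_eq_zero]
    intro i _
    rw [if_neg (fun hc => h (hc.1.symm.trans hc.2)), mul_zero]

private lemma hasDerivAt_diagonal {f : ℝ → ι → ℝ} {f' : ι → ℝ} {A : ℝ}
    (h : ∀ j, HasDerivAt (fun t => f t j) (f' j) A) :
    HasDerivAt (fun t => Matrix.diagonal (f t)) (Matrix.diagonal f') A := by
  simp_rw [diagonal_eq_sum]
  exact HasDerivAt.fun_sum fun i _ => (h i).smul_const _

/-- multiplication on left and right by constant rectangular matrices, as a CLM -/
private noncomputable def mulLR (Y : Matrix κ ι ℝ) (Z : Matrix ι κ ℝ) :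
    Matrix ι ι ℝ →L[ℝ] Matrix κ κ ℝ :=
  LinearMap.toContinuousLinearMap
    { toFun := fun M => Y * M * Z
      map_add' := fun a b => by simp [Matrix.mul_add, Matrix.add_mul]
      map_smul' := fun r a => by simp [Matrix.mul_smul, Matrix.smul_mul] }

private lemma mulLR_apply (Y : Matrix κ ι ℝ) (Z : Matrix ι κ ℝ) (M : Matrix ι ι ℝ) :
    mulLR Y Z M = Y * M * Z := rfl

/-- entry evaluation as a CLM -/
private noncomputable def entryCLM (j k : ι) : Matrix ι ι ℝ →L[ℝ] ℝ :=
  LinearMap.toContinuousLinearMap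
    { toFun := fun M => M j k
      map_add' := fun a b => rfl
      map_smul' := fun r a => rfl }

end aux

/-- The matrix-valued map `A ↦ P(A) = Σ(A)⁻¹ − Σ(A)⁻¹X(XᵀΣ(A)⁻¹X)⁻¹XᵀΣ(A)⁻¹` is
differentiable on `(0, ∞)` with derivative `dP/dA = −P(A)·P(A)` at every `A > 0`,
entrywise. -/
theorem residual_matrix_hasDerivAt
    {ι : Type*} [Fintype ι] [DecidableEq ι] {p : ℕ}
    (Dv : ι → ℝ) (hDv : ∀ j, 0 < Dv j)
    (X : Matrix ι (Fin p) ℝ)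
    (Sg : ℝ → Matrix ι ι ℝ)
    (hSg : ∀ A : ℝ, Sg A = Matrix.diagonal fun j => A + Dv j)
    (hX_unit : ∀ A : ℝ, 0 < A → IsUnit (Xᵀ * (Sg A)⁻¹ * X))
    (P : ℝ → Matrix ι ι ℝ)
    (hP : ∀ A : ℝ,
      P A = (Sg A)⁻¹ - (Sg A)⁻¹ * X * (Xᵀ * (Sg A)⁻¹ * X)⁻¹ * Xᵀ * (Sg A)⁻¹) :
    ∀ A : ℝ, 0 < A → ∀ j k : ι,
      HasDerivAt (fun t => P t j k) ((-(P A * P A)) j k) A := by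
  intro A hA j k
  set iS : ℝ → Matrix ι ι ℝ := fun t => Matrix.diagonal (fun j => (t + Dv j)⁻¹) with hiSdef
  -- (Sg t)⁻¹ = iS t for t > 0
  have hSinv : ∀ t : ℝ, 0 < t → (Sg t)⁻¹ = iS t := by
    intro t ht
    rw [hSg]
    refine Matrix.inv_eq_right_inv ?_
    rw [Matrix.diagonal_mul_diagonal]
    have : (fun i => (t + Dv i) * (t + Dv i)⁻¹) = fun _ => (1 : ℝ) :=
      funext fun i => mul_inv_cancel₀ (add_pos ht (hDv i)).ne'
    rw [this, Matrix.diagonal_one]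
  have hpos : ∀ i : ι, 0 < A + Dv i := fun i => add_pos hA (hDv i)
  -- derivative of iS
  set S : Matrix ι ι ℝ := iS A with hSdef
  set S' : Matrix ι ι ℝ := -(S * S) with hS'def
  have hS'diag : S' = Matrix.diagonal (fun i => -((A + Dv i)⁻¹ * (A + Dv i)⁻¹)) := by
    rw [hS'def, hSdef, hiSdef]
    simp only [Matrix.diagonal_mul_diagonal, ← Matrix.diagonal_neg]
  have hiS : HasDerivAt iS S' A := by
    rw [hS'diag]
    refine hasDerivAt_diagonal fun i => ?_
    have h1 : HasDerivAt (fun t : ℝ => t + Dv i) 1 A := (hasDerivAt_id A).add_const _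
    have h2 := h1.inv (ne_of_gt (hpos i))
    refine HasDerivAt.congr_deriv h2 ?_
    rw [neg_div, one_div, ← inv_pow, sq]
  -- the inner p×p matrix function and its inverse
  obtain ⟨u, hu⟩ := hX_unit A hA
  rw [hSinv A hA] at hu
  set R : Matrix (Fin p) (Fin p) ℝ := ↑u⁻¹ with hRdef
  have hN : HasDerivAt (fun t => Xᵀ * iS t * X) (Xᵀ * S' * X) A := by
    have := (mulLR Xᵀ X).hasFDerivAt.comp_hasDerivAt A hiS
    exact this
  have hRinv : Ring.inverse (Xᵀ * S * X) = R := by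
    rw [hSdef, ← hu, Ring.inverse_unit]
  have hRd : HasDerivAt (fun t => Ring.inverse (Xᵀ * iS t * X))
      (-(R * (Xᵀ * S' * X) * R)) A := by
    have hfd := hasFDerivAt_ringInverse (𝕜 := ℝ) (R := Matrix (Fin p) (Fin p) ℝ) u
    rw [hu] at hfd
    have h2 := hfd.comp_hasDerivAt A hN
    simp only [ContinuousLinearMap.neg_apply, ContinuousLinearMap.mulLeftRight_apply] at h2
    exact h2
  set N' : Matrix (Fin p) (Fin p) ℝ := Xᵀ * S' * X with hN'def
  set K : Matrix ι ι ℝ := X * R * Xᵀ with hKdef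
  set K' : Matrix ι ι ℝ := X * -(R * N' * R) * Xᵀ with hK'def
  have hK : HasDerivAt (fun t => X * Ring.inverse (Xᵀ * iS t * X) * Xᵀ) K' A := by
    have := (mulLR (ι := Fin p) (κ := ι) X Xᵀ).hasFDerivAt.comp_hasDerivAt A hRd
    exact this
  -- the full function
  set f : ℝ → Matrix ι ι ℝ :=
    fun t => iS t - iS t * (X * Ring.inverse (Xᵀ * iS t * X) * Xᵀ) * iS t with hfdef
  set F' : Matrix ι ι ℝ := S' - ((S' * K + S * K') * S + S * K * S') with hF'def
  have hf : HasDerivAt f F' A := by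
    have hmid : HasDerivAt
        (fun t => iS t * (X * Ring.inverse (Xᵀ * iS t * X) * Xᵀ) * iS t)
        ((S' * K + S * K') * S + S * K * S') A := by
      have := (hiS.fun_mul hK).fun_mul hiS
      simp only [← hSdef] at this
      rw [hRinv] at this
      exact this
    exact hiS.sub hmid
  -- P agrees with f near A
  have hev : ∀ᶠ t in nhds A, P t j k = f t j k := by
    have hmem : {t : ℝ | 0 < t} ∈ nhds A := isOpen_Ioi.mem_nhds hA
    filter_upwards [hmem] with t ht
    have : P t = f t := by
      rw [hP t, hfdef, hSinv t ht, Matrix.nonsing_inv_eq_ringInverse]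
      simp only [Matrix.mul_assoc]
    rw [this]
  -- entrywise derivative of f
  have hfe : HasDerivAt (fun t => f t j k) (F' j k) A := by
    have := (entryCLM j k).hasFDerivAt.comp_hasDerivAt A hf
    exact this
  -- identify the derivative
  have hPA : P A = S - S * K * S := by
    rw [hP A, hSinv A hA, Matrix.nonsing_inv_eq_ringInverse, hRinv, hKdef]
    simp only [Matrix.mul_assoc]
    rfl
  have hiden : F' = -(P A * P A) := by
    have hK'eq : K' = K * (S * S) * K := by
      rw [hK'def, hKdef, hN'def, hS'def]
      simp only [Matrix.mul_neg, Matrix.neg_mul, neg_neg, Matrix.mul_assoc]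
    rw [hF'def, hPA, hK'eq, hS'def]
    noncomm_ring
  rw [← hiden]
  exact hfe.congr_of_eventuallyEq hev
end

section
/- Monotonicity of the Fay–Herriot estimating function: for any fixed vector Y ∈ ℝ^ι, the function f(A) = Yᵀ P(A) Y is antitone (monotonically nonincreasing) on (0, ∞); indeed at every A > 0 it has derivative f′(A) = −Yᵀ P(A)² Y = −‖P(A)·Y‖² ≤ 0. -/
/-!
Write `P(S) = S⁻¹ - S⁻¹X(XᵀS⁻¹X)⁻¹XᵀS⁻¹`. Since `P(S) X = 0` and `Xᵀ P(T) = 0`, the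
resolvent identity `P(S) - P(T) = P(S) (T - S) P(T)` holds, and for `Σ(A) = diag(A + D_j)` it
reads `P(s) - P(t) = (t - s) P(s) P(t)`. Hence the difference quotient of `f(A) = Yᵀ P(A) Y`
between `s` and `t` is `-Yᵀ P(s) P(t) Y`, which tends to `-Yᵀ P(t)² Y = -‖P(t) Y‖²` by
continuity of `P`, and a nonpositive derivative makes `f` antitone.
-/

open Matrix Filter Topology

namespace Matrix

variable {n m : Type*}

theorem diagonal_const_add_sub_diagonal_const_add [DecidableEq n] {R : Type*} [Ring R]
    (a b : R) (d : n → R) :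
    (diagonal fun j => a + d j) - diagonal (fun j => b + d j) = (a - b) • (1 : Matrix n n R) := by
  rw [diagonal_sub, smul_one_eq_diagonal]
  simp only [add_sub_add_right_eq_sub]

section Algebra

variable [Fintype n] [DecidableEq n] [Fintype m] [DecidableEq m] {R : Type*} [CommRing R]

/-- `glsAnnihilator S X *ᵥ Y = S⁻¹ *ᵥ (Y - X *ᵥ β̃)`, where `β̃` is the generalized least squares
estimate of `β` in the model `Y = X *ᵥ β + ε` with covariance matrix `S`. -/
noncomputable def glsAnnihilator (S : Matrix n n R) (X : Matrix n m R) : Matrix n n R :=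
  S⁻¹ - S⁻¹ * X * (Xᵀ * S⁻¹ * X)⁻¹ * Xᵀ * S⁻¹

variable {S T : Matrix n n R} {X : Matrix n m R}

theorem glsAnnihilator_mul_eq_zero (hM : IsUnit (Xᵀ * S⁻¹ * X).det) :
    glsAnnihilator S X * X = 0 := by
  have h := nonsing_inv_mul _ hM
  simp only [Matrix.mul_assoc] at h
  simp only [glsAnnihilator, Matrix.sub_mul, Matrix.mul_assoc, h, Matrix.mul_one, sub_self]

theorem transpose_mul_glsAnnihilator_eq_zero (hM : IsUnit (Xᵀ * S⁻¹ * X).det) :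
    Xᵀ * glsAnnihilator S X = 0 := by
  have h := mul_nonsing_inv _ hM
  simp only [glsAnnihilator, Matrix.mul_sub, ← Matrix.mul_assoc, h, Matrix.one_mul, sub_self]

theorem mul_glsAnnihilator (hS : IsUnit S.det) :
    S * glsAnnihilator S X = 1 - X * (Xᵀ * S⁻¹ * X)⁻¹ * Xᵀ * S⁻¹ := by
  simp only [glsAnnihilator, Matrix.mul_sub, ← Matrix.mul_assoc, mul_nonsing_inv _ hS,
    Matrix.one_mul]

theorem glsAnnihilator_mul (hS : IsUnit S.det) :
    glsAnnihilator S X * S = 1 - S⁻¹ * X * (Xᵀ * S⁻¹ * X)⁻¹ * Xᵀ := by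
  simp only [glsAnnihilator, Matrix.sub_mul, Matrix.mul_assoc, nonsing_inv_mul _ hS,
    Matrix.mul_one]

theorem glsAnnihilator_sub_glsAnnihilator (hS : IsUnit S.det) (hT : IsUnit T.det)
    (hMS : IsUnit (Xᵀ * S⁻¹ * X).det) (hMT : IsUnit (Xᵀ * T⁻¹ * X).det) :
    glsAnnihilator S X - glsAnnihilator T X
      = glsAnnihilator S X * (T - S) * glsAnnihilator T X := by
  rw [Matrix.mul_sub, Matrix.sub_mul, Matrix.mul_assoc, mul_glsAnnihilator hT,
    glsAnnihilator_mul hS]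
  simp only [Matrix.mul_sub, Matrix.sub_mul, Matrix.mul_one, Matrix.one_mul, ← Matrix.mul_assoc,
    glsAnnihilator_mul_eq_zero hMS]
  simp only [Matrix.mul_assoc, transpose_mul_glsAnnihilator_eq_zero hMT]
  simp

theorem glsAnnihilator_sub_glsAnnihilator_of_sub_eq_smul_one {c : R} (hST : T - S = c • 1)
    (hS : IsUnit S.det) (hT : IsUnit T.det) (hMS : IsUnit (Xᵀ * S⁻¹ * X).det)
    (hMT : IsUnit (Xᵀ * T⁻¹ * X).det) :
    glsAnnihilator S X - glsAnnihilator T X = c • (glsAnnihilator S X * glsAnnihilator T X) := by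
  rw [glsAnnihilator_sub_glsAnnihilator hS hT hMS hMT, hST, Matrix.mul_smul, Matrix.mul_one,
    Matrix.smul_mul]

theorem isSymm_glsAnnihilator (hS : S.IsSymm) : (glsAnnihilator S X).IsSymm := by
  simp only [IsSymm, glsAnnihilator, transpose_sub, transpose_mul, transpose_nonsing_inv,
    transpose_transpose, hS.eq, Matrix.mul_assoc]

end Algebra

theorem IsSymm.dotProduct_mul_self_mulVec [Fintype n] {R : Type*} [CommSemiring R]
    {P : Matrix n n R} (hP : P.IsSymm) (v : n → R) :
    v ⬝ᵥ ((P * P) *ᵥ v) = (P *ᵥ v) ⬝ᵥ (P *ᵥ v) := by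
  rw [← mulVec_mulVec, dotProduct_mulVec, ← mulVec_transpose, hP.eq]

section Continuity

variable [Fintype n] [DecidableEq n] [Fintype m] [DecidableEq m]
  {K : Type*} [Field K] [TopologicalSpace K] [IsTopologicalDivisionRing K]

theorem continuousAt_inv_of_det_ne_zero {S : Matrix n n K} (hS : S.det ≠ 0) :
    ContinuousAt Inv.inv S :=
  continuousAt_matrix_inv S (by simpa only [Ring.inverse_eq_inv'] using continuousAt_inv₀ hS)

theorem continuousAt_glsAnnihilator {S : Matrix n n K} {X : Matrix n m K} (hS : S.det ≠ 0)
    (hM : (Xᵀ * S⁻¹ * X).det ≠ 0) :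
    ContinuousAt (glsAnnihilator · X) S := by
  have := continuousAt_inv_of_det_ne_zero hS
  have := continuousAt_inv_of_det_ne_zero hM
  unfold glsAnnihilator
  fun_prop

end Continuity

theorem hasDerivAt_dotProduct_mulVec_of_resolvent [Fintype n] {𝕜 : Type*}
    [NontriviallyNormedField 𝕜]
    {f : 𝕜 → Matrix n n 𝕜} {a : 𝕜} (hf : ContinuousAt f a)
    (hres : ∀ᶠ t in 𝓝 a, f t - f a = (a - t) • (f t * f a)) (v w : n → 𝕜) :
    HasDerivAt (fun t => v ⬝ᵥ (f t *ᵥ w)) (-(v ⬝ᵥ ((f a * f a) *ᵥ w))) a := by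
  rw [hasDerivAt_iff_tendsto_slope]
  have hslope : ∀ᶠ t in 𝓝[≠] a,
      -(v ⬝ᵥ ((f t * f a) *ᵥ w)) = slope (fun t => v ⬝ᵥ (f t *ᵥ w)) a t := by
    filter_upwards [nhdsWithin_le_nhds hres, self_mem_nhdsWithin] with t ht hta
    rw [slope_def_field, ← dotProduct_sub, ← sub_mulVec, ht, smul_mulVec, dotProduct_smul,
      smul_eq_mul]
    field_simp [sub_ne_zero.2 hta]
    ring
  have hlim : ContinuousAt (fun t => -(v ⬝ᵥ ((f t * f a) *ᵥ w))) a := by fun_prop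
  exact (hlim.tendsto.mono_left nhdsWithin_le_nhds).congr' hslope

end Matrix

/-- Monotonicity of the Fay–Herriot estimating function: for fixed `Y ∈ ℝ^ι`, the
function `f(A) = Yᵀ P(A) Y` is antitone on `(0, ∞)`; indeed at every `A > 0` it has
derivative `f′(A) = −Yᵀ P(A)² Y = −‖P(A)·Y‖² ≤ 0`. -/
theorem fay_herriot_estimating_function_antitone
    {ι : Type*} [Fintype ι] [DecidableEq ι] {p : ℕ}
    (Dv : ι → ℝ) (hDv : ∀ j, 0 < Dv j)
    (X : Matrix ι (Fin p) ℝ)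
    (Sg : ℝ → Matrix ι ι ℝ)
    (hSg : ∀ A : ℝ, Sg A = Matrix.diagonal fun j => A + Dv j)
    (hX_unit : ∀ A : ℝ, 0 < A → IsUnit (Xᵀ * (Sg A)⁻¹ * X))
    (P : ℝ → Matrix ι ι ℝ)
    (hP : ∀ A : ℝ,
      P A = (Sg A)⁻¹ - (Sg A)⁻¹ * X * (Xᵀ * (Sg A)⁻¹ * X)⁻¹ * Xᵀ * (Sg A)⁻¹)
    (Y : ι → ℝ) :
    AntitoneOn (fun A => Y ⬝ᵥ (P A *ᵥ Y)) (Set.Ioi (0 : ℝ)) ∧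
      ∀ A : ℝ, 0 < A →
        HasDerivAt (fun t => Y ⬝ᵥ (P t *ᵥ Y)) (-(Y ⬝ᵥ ((P A * P A) *ᵥ Y))) A ∧
          Y ⬝ᵥ ((P A * P A) *ᵥ Y) = (P A *ᵥ Y) ⬝ᵥ (P A *ᵥ Y) ∧
          -(Y ⬝ᵥ ((P A * P A) *ᵥ Y)) ≤ 0 := by
  have hPgls : ∀ A, P A = glsAnnihilator (Sg A) X := hP
  have hSdet : ∀ A, 0 < A → IsUnit (Sg A).det := fun A hA => by
    rw [hSg, det_diagonal]
    exact (Finset.prod_pos fun j _ => add_pos hA (hDv j)).ne'.isUnit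
  have hMdet : ∀ A, 0 < A → IsUnit (Xᵀ * (Sg A)⁻¹ * X).det := fun A hA =>
    (isUnit_iff_isUnit_det _).1 (hX_unit A hA)
  have hSg_cont : Continuous Sg := by
    rw [funext hSg]
    fun_prop
  have hsq : ∀ A, Y ⬝ᵥ ((P A * P A) *ᵥ Y) = (P A *ᵥ Y) ⬝ᵥ (P A *ᵥ Y) := fun A => by
    rw [hPgls]
    exact (isSymm_glsAnnihilator (hSg A ▸ isSymm_diagonal _)).dotProduct_mul_self_mulVec Y
  have hnonpos : ∀ A, -(Y ⬝ᵥ ((P A * P A) *ᵥ Y)) ≤ 0 := fun A => by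
    simpa only [hsq A, neg_nonpos, star_trivial] using dotProduct_star_self_nonneg (P A *ᵥ Y)
  have hderiv : ∀ A, 0 < A →
      HasDerivAt (fun t => Y ⬝ᵥ (P t *ᵥ Y)) (-(Y ⬝ᵥ ((P A * P A) *ᵥ Y))) A := by
    intro A hA
    refine hasDerivAt_dotProduct_mulVec_of_resolvent ?_ ?_ Y Y
    · rw [funext hPgls]
      exact (continuousAt_glsAnnihilator (hSdet A hA).ne_zero (hMdet A hA).ne_zero).comp
        hSg_cont.continuousAt
    · filter_upwards [Ioi_mem_nhds hA] with t ht
      rw [hPgls, hPgls]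
      exact glsAnnihilator_sub_glsAnnihilator_of_sub_eq_smul_one
        (by rw [hSg, hSg, diagonal_const_add_sub_diagonal_const_add])
        (hSdet t ht) (hSdet A hA) (hMdet t ht) (hMdet A hA)
  refine ⟨antitoneOn_of_hasDerivWithinAt_nonpos (f' := fun A => -(Y ⬝ᵥ ((P A * P A) *ᵥ Y)))
    (convex_Ioi 0) (fun A hA => (hderiv A hA).continuousAt.continuousWithinAt) ?_
    fun A _ => hnonpos A, fun A hA => ⟨hderiv A hA, hsq A, hnonpos A⟩⟩
  rw [interior_Ioi]
  exact fun A hA => (hderiv A hA).hasDerivWithinAt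
end
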